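/- arXiv:0911.2682 — 2 statements merged into one kernel-verified Lean document; each statement's English description precedes it below -/
import Mathlib

section
/- Consider v₁' = −v₂/v₁, v₂' = −v₂ with initial data v₂(0) > v₁(0)² > 0 (using the explicit solution v₁(t) = √(v₁(0)² + v₂(0)(e^{−t}−1))). Then there exists a finite time T > 0, namely T = −ln(1 − v₁(0)²/v₂(0)), such that v₁(t) > 0 for t ∈ [0,T) and lim_{t→T⁻} v₁(t) = 0; moreover v₁'(t) = −v₂(t)/v₁(t) → −∞ as t → T⁻. Hence the solution reaches the singular set {v₁ = 0} in finite time with blow-up of the first derivative. -/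
open Filter Topology

/-- Finite-time blow-up for the singular system `v₁' = -v₂/v₁`, `v₂' = -v₂` with
`v₂(0) > v₁(0)² > 0`: for `T = -ln(1 - v₁(0)²/v₂(0))` one has `T > 0`,
`v₁ > 0` on `[0, T)`, `v₁(t) → 0` as `t → T⁻`, and the right-hand side
`-v₂/v₁` tends to `-∞` as `t → T⁻`. -/
theorem singular_system_finite_time_blowup
    (a b : ℝ) (ha : 0 < a) (hb : a ^ 2 < b)
    (v1 v2 : ℝ → ℝ)
    (hv1 : ∀ t, v1 t = Real.sqrt (a ^ 2 + b * (Real.exp (-t) - 1)))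
    (hv2 : ∀ t, v2 t = b * Real.exp (-t))
    (T : ℝ) (hT : T = -Real.log (1 - a ^ 2 / b)) :
    0 < T ∧
    (∀ t ∈ Set.Ico (0 : ℝ) T, 0 < v1 t) ∧
    Tendsto v1 (𝓝[<] T) (𝓝 0) ∧
    Tendsto (fun t => -(v2 t) / v1 t) (𝓝[<] T) atBot := by
  have ha2 : 0 < a ^ 2 := by positivity
  have hb0 : (0 : ℝ) < b := ha2.trans hb
  have hx0 : 0 < 1 - a ^ 2 / b := by
    rw [sub_pos, div_lt_one hb0]; exact hb
  have hx1 : 1 - a ^ 2 / b < 1 := by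
    have : 0 < a ^ 2 / b := by positivity
    linarith
  have hexpT : Real.exp (-T) = 1 - a ^ 2 / b := by
    rw [hT, neg_neg, Real.exp_log hx0]
  have hfT : a ^ 2 + b * (Real.exp (-T) - 1) = 0 := by
    rw [hexpT]; field_simp; ring
  have hTpos : 0 < T := by
    by_contra h
    push_neg at h
    have : (1:ℝ) ≤ Real.exp (-T) := by
      rw [← Real.exp_zero]; exact Real.exp_le_exp.2 (by linarith)
    rw [hexpT] at this; linarith
  have hpos : ∀ t < T, 0 < v1 t := by
    intro t ht
    rw [hv1]
    apply Real.sqrt_pos.2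
    have : Real.exp (-T) < Real.exp (-t) := Real.exp_lt_exp.2 (by linarith)
    nlinarith
  have hcont : Continuous v1 := by
    have : Continuous fun t => Real.sqrt (a ^ 2 + b * (Real.exp (-t) - 1)) := by
      fun_prop
    exact (funext hv1 : v1 = _) ▸ this
  have hv1T : v1 T = 0 := by rw [hv1, hfT, Real.sqrt_zero]
  have htend0 : Tendsto v1 (𝓝[<] T) (𝓝 0) := by
    have h := (hcont.tendsto T).mono_left (nhdsWithin_le_nhds : 𝓝[<] T ≤ 𝓝 T)
    rwa [hv1T] at h
  refine ⟨hTpos, fun t ht => hpos t ht.2, htend0, ?_⟩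
  have htendpos : Tendsto v1 (𝓝[<] T) (𝓝[>] 0) := by
    rw [tendsto_nhdsWithin_iff]
    refine ⟨htend0, ?_⟩
    filter_upwards [self_mem_nhdsWithin] with t ht
    exact hpos t ht
  have hinv : Tendsto (fun t => (v1 t)⁻¹) (𝓝[<] T) atTop :=
    tendsto_inv_nhdsGT_zero.comp htendpos
  have hnum : Tendsto (fun t => -(v2 t)) (𝓝[<] T) (𝓝 (-(b * Real.exp (-T)))) := by
    have : Continuous fun t => -(v2 t) := by
      have : Continuous fun t => -(b * Real.exp (-t)) := by fun_prop
      simpa only [← hv2] using this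
    have h := (this.tendsto T).mono_left (nhdsWithin_le_nhds : 𝓝[<] T ≤ 𝓝 T)
    rwa [hv2 T] at h
  have hC : -(b * Real.exp (-T)) < 0 := by
    have : 0 < Real.exp (-T) := Real.exp_pos _
    nlinarith
  have := hnum.neg_mul_atTop hC hinv
  simpa [div_eq_mul_inv] using this
end

section
/- Consider F : ℝ³ → ℝ³ given by F(v₁,v₂,v₃) = (−v₃v₁, −v₂, −v₃v₁) and ζ(v₁,v₂,v₃) = v₁, with singular set S = {v₁ = 0}. Then ∇ζ(V)·F(V) = −v₃v₁ vanishes identically on S, so Hypothesis 'ζ transversal' holds; however the continuous extension G(V) = (∇ζ(V)·F(V))/ζ(V) = −v₃ does not vanish at all singular equilibria: the set {V : F(V)=0, ζ(V)=0} equals {(0,0,v₃) : v₃ ∈ ℝ}, and G(0,0,v₃) = −v₃ ≠ 0 for v₃ ≠ 0. -/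
/-- For `F(v₁,v₂,v₃) = (-v₃v₁, -v₂, -v₃v₁)` and `ζ(v₁,v₂,v₃) = v₁`:
`∇ζ(V)·F(V) = -v₃v₁` vanishes on the singular set `S = {v₁ = 0}`; the
continuous extension `G(V) = (∇ζ·F)/ζ = -v₃`; the set of singular equilibria
`{F = 0} ∩ {ζ = 0}` is exactly `{(0,0,v₃)}`; and `G(0,0,v₃) = -v₃ ≠ 0` for
`v₃ ≠ 0`, so `G` does not vanish at all singular equilibria. -/
theorem G_nonzero_at_singular_equilibria
    (F : ℝ × ℝ × ℝ → ℝ × ℝ × ℝ)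
    (hF : ∀ p, F p = (-p.2.2 * p.1, -p.2.1, -p.2.2 * p.1))
    (ζ : ℝ × ℝ × ℝ → ℝ) (hζ : ∀ p, ζ p = p.1)
    (G : ℝ × ℝ × ℝ → ℝ) (hG : ∀ p, G p = -p.2.2) :
    (∀ V : ℝ × ℝ × ℝ, fderiv ℝ ζ V (F V) = -V.2.2 * V.1) ∧
    (∀ V : ℝ × ℝ × ℝ, ζ V = 0 → fderiv ℝ ζ V (F V) = 0) ∧
    (∀ V : ℝ × ℝ × ℝ, ζ V ≠ 0 → G V = fderiv ℝ ζ V (F V) / ζ V) ∧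
    ({V : ℝ × ℝ × ℝ | F V = 0 ∧ ζ V = 0} =
      {V : ℝ × ℝ × ℝ | V.1 = 0 ∧ V.2.1 = 0}) ∧
    (∀ v₃ : ℝ, v₃ ≠ 0 → G (0, 0, v₃) ≠ 0) := by
  have hζeq : ζ = Prod.fst := funext hζ
  have hd : ∀ V : ℝ × ℝ × ℝ, fderiv ℝ ζ V (F V) = -V.2.2 * V.1 := by
    intro V
    rw [hζeq]
    have h1 : fderiv ℝ (Prod.fst : ℝ × ℝ × ℝ → ℝ) V =
        ContinuousLinearMap.fst ℝ ℝ (ℝ × ℝ) :=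
      (ContinuousLinearMap.fst ℝ ℝ (ℝ × ℝ)).fderiv
    rw [h1, hF]
    rfl
  refine ⟨hd, ?_, ?_, ?_, ?_⟩
  · intro V h
    rw [hd V, hζ V] at *
    rw [h]; ring
  · intro V h
    rw [hd V, hζ V] at *
    rw [hG V]
    field_simp
  · ext V
    simp only [Set.mem_setOf_eq, hF, hζ, Prod.mk.injEq, Prod.ext_iff]
    constructor
    · rintro ⟨⟨h1, h2, h3⟩, h4⟩
      exact ⟨h4, by simpa using h2⟩
    · rintro ⟨h1, h2⟩
      refine ⟨⟨?_, ?_, ?_⟩, h1⟩ <;> simp [h1, h2]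
  · intro v₃ h
    rw [hG]
    simpa using h
end
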